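/- arXiv:2306.01663 — 3 statements merged into one kernel-verified Lean document; each statement's English description precedes it below -/
import Mathlib

section
/- The function f(t) = tan(t)/t (extended by f(0) = 1) is strictly increasing on the interval [0, π/2). -/
open Real Set

lemma aux_strictMonoOn : StrictMonoOn (fun t : ℝ => Real.tan t / t)
    (Set.Ioo 0 (Real.pi / 2)) := by
  have hconv : Convex ℝ (Set.Ioo (0:ℝ) (Real.pi/2)) := convex_Ioo _ _
  apply StrictMonoOn.mono (s := Set.Ioo 0 (Real.pi/2)) ?_ le_rfl
  apply strictMonoOn_of_deriv_pos hconv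
  · intro x hx
    have hx0 : x ≠ 0 := ne_of_gt hx.1
    have hcos : Real.cos x ≠ 0 := (Real.cos_pos_of_mem_Ioo ⟨by linarith [hx.1, Real.pi_pos], hx.2⟩).ne'
    exact ((Real.continuousAt_tan.2 hcos).continuousWithinAt.div continuousWithinAt_id hx0)
  · intro x hx
    rw [interior_Ioo] at hx
    have hx0 : 0 < x := hx.1
    have hcos : 0 < Real.cos x := Real.cos_pos_of_mem_Ioo ⟨by linarith [Real.pi_pos], hx.2⟩
    have hd : HasDerivAt (fun t : ℝ => Real.tan t / t)
        ((1 / Real.cos x ^ 2 * x - Real.tan x * 1) / x ^ 2) x :=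
      (Real.hasDerivAt_tan hcos.ne').div (hasDerivAt_id x) hx0.ne'
    rw [hd.deriv]
    apply div_pos _ (by positivity)
    have hsin : Real.sin x * Real.cos x < x := by
      calc Real.sin x * Real.cos x ≤ Real.sin x * 1 := by
            have := Real.sin_pos_of_pos_of_lt_pi hx0 (by linarith [Real.pi_pos, hx.2])
            nlinarith [Real.cos_le_one x]
        _ < x := by simpa using Real.sin_lt hx0
    rw [Real.tan_eq_sin_div_cos, mul_one, sub_pos, div_lt_iff₀ hcos]
    have he : 1 / Real.cos x ^ 2 * x * Real.cos x = x / Real.cos x := by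
      field_simp
    rw [he, lt_div_iff₀ hcos]
    exact hsin

theorem strictMonoOn_tan_div_self :
    StrictMonoOn (fun t : ℝ => if t = 0 then 1 else Real.tan t / t)
      (Set.Ico 0 (Real.pi / 2)) := by
  intro x hx y hy hxy
  have hy0 : 0 < y := lt_of_le_of_lt hx.1 hxy
  simp only [hy0.ne', if_false]
  rcases eq_or_lt_of_le hx.1 with h0 | h0
  · simp only [← h0, if_pos rfl, if_true]
    rw [lt_div_iff₀ hy0, one_mul]
    exact Real.lt_tan hy0 hy.2
  · rw [if_neg h0.ne']
    exact aux_strictMonoOn ⟨h0, lt_trans hxy hy.2⟩ ⟨hy0, hy.2⟩ hxy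
end

section
/- If r ∈ (0,1] and ρ ∈ (0, π/2), then π/2 - arctan((cot ρ)/r) ≥ r·ρ/2. -/
open Real in
lemma half_le_arctan {y : ℝ} (h0 : 0 < y) (h2 : y ≤ π / 2) : y / 2 ≤ Real.arctan y := by
  have hpi := Real.pi_gt_three
  have ht0 : 0 < y / 2 := by linarith
  have ht4 : y / 2 ≤ π / 4 := by linarith
  have hcos : Real.sqrt 2 / 2 ≤ Real.cos (y / 2) := by
    rw [← Real.cos_pi_div_four]
    exact Real.cos_le_cos_of_nonneg_of_le_pi (by linarith) (by linarith) ht4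
  have hcos0 : (0:ℝ) < Real.cos (y / 2) := by
    have : (0:ℝ) < Real.sqrt 2 / 2 := by positivity
    linarith
  have hsin : Real.sin (y / 2) ≤ y / 2 := le_of_lt (Real.sin_lt ht0)
  have hsqrt2 : Real.sqrt 2 ≤ 2 := by
    nlinarith [Real.sq_sqrt (by norm_num : (2:ℝ) ≥ 0), Real.sqrt_nonneg 2]
  have htan : Real.tan (y / 2) ≤ y := by
    rw [Real.tan_eq_sin_div_cos]
    rw [div_le_iff₀ hcos0]
    have h1 : y * (Real.sqrt 2 / 2) ≤ y * Real.cos (y / 2) :=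
      mul_le_mul_of_nonneg_left hcos (le_of_lt h0)
    nlinarith [Real.sqrt_nonneg 2, Real.one_le_sqrt.mpr (by norm_num : (1:ℝ) ≤ 2), mul_pos h0 hcos0]
  calc y / 2 = Real.arctan (Real.tan (y / 2)) :=
        (Real.arctan_tan (by linarith) (by linarith)).symm
    _ ≤ Real.arctan y := Real.arctan_strictMono.monotone htan

theorem pi_div_two_sub_arctan_ge (r ρ : ℝ) (hr : r ∈ Set.Ioc (0 : ℝ) 1)
    (hρ : ρ ∈ Set.Ioo 0 (Real.pi / 2)) :
    Real.pi / 2 - Real.arctan ((Real.cos ρ / Real.sin ρ) / r) ≥ r * ρ / 2 := by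
  obtain ⟨hr0, hr1⟩ := hr
  obtain ⟨hρ0, hρ2⟩ := hρ
  have hpi := Real.pi_gt_three
  have hsin : 0 < Real.sin ρ := Real.sin_pos_of_pos_of_lt_pi hρ0 (by linarith)
  have hcos : 0 < Real.cos ρ := Real.cos_pos_of_mem_Ioo ⟨by linarith, hρ2⟩
  have hx : 0 < (Real.cos ρ / Real.sin ρ) / r := by positivity
  have hinv : ((Real.cos ρ / Real.sin ρ) / r)⁻¹ = r * Real.tan ρ := by
    rw [Real.tan_eq_sin_div_cos]
    field_simp
  have key : Real.arctan (((Real.cos ρ / Real.sin ρ) / r)⁻¹)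
      = Real.pi / 2 - Real.arctan ((Real.cos ρ / Real.sin ρ) / r) :=
    Real.arctan_inv_of_pos hx
  rw [ge_iff_le, ← key, hinv]
  have htan : ρ < Real.tan ρ := Real.lt_tan hρ0 hρ2
  have h1 : r * ρ ≤ r * Real.tan ρ := by nlinarith
  have h2 : r * ρ / 2 ≤ Real.arctan (r * ρ) :=
    half_le_arctan (by positivity) (by nlinarith)
  calc r * ρ / 2 ≤ Real.arctan (r * ρ) := h2
    _ ≤ Real.arctan (r * Real.tan ρ) := Real.arctan_strictMono.monotone h1
end

section
/- If r ∈ (0,1] and ρ ∈ (0, π/2), then arccot((cot ρ)/r) ≥ r·ρ/2, where arccot takes values in (0, π). -/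
/-- `arccot x = π/2 - arctan x`, taking values in `(0, π)`. -/
noncomputable def arccot (x : ℝ) : ℝ := Real.pi / 2 - Real.arctan x

theorem arccot_ge (r ρ : ℝ) (hr : r ∈ Set.Ioc (0 : ℝ) 1)
    (hρ : ρ ∈ Set.Ioo 0 (Real.pi / 2)) :
    arccot ((Real.cos ρ / Real.sin ρ) / r) ≥ r * ρ / 2 := by
  obtain ⟨hr0, hr1⟩ := hr
  obtain ⟨hρ0, hρ2⟩ := hρ
  have hpi : (3 : ℝ) < Real.pi := Real.pi_gt_three
  set θ : ℝ := r * ρ / 2 with hθdef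
  have hθ0 : 0 < θ := by positivity
  have hθρ : θ ≤ ρ := by nlinarith
  have hθ2 : θ < Real.pi / 2 := lt_of_le_of_lt hθρ hρ2
  have hsinρ : 0 < Real.sin ρ := Real.sin_pos_of_pos_of_lt_pi hρ0 (by linarith)
  have hsinθ : 0 < Real.sin θ := Real.sin_pos_of_pos_of_lt_pi hθ0 (by linarith)
  have hcosθ : 0 < Real.cos θ := Real.cos_pos_of_mem_Ioo ⟨by linarith, hθ2⟩
  have hcosρ : 0 ≤ Real.cos ρ := Real.cos_nonneg_of_mem_Icc ⟨by linarith, le_of_lt hρ2⟩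
  -- Jordan: 2/π * ρ ≤ sin ρ, hence ρ/2 ≤ sin ρ
  have hjordan : 2 / Real.pi * ρ ≤ Real.sin ρ := Real.mul_le_sin (le_of_lt hρ0) (le_of_lt hρ2)
  have hρ2sin : ρ / 2 ≤ Real.sin ρ := by
    have hpi4 : Real.pi ≤ 4 := Real.pi_le_four
    have : ρ / 2 ≤ 2 / Real.pi * ρ := by
      rw [div_mul_eq_mul_div, le_div_iff₀ (by linarith : (0:ℝ) < Real.pi)]
      nlinarith
    linarith
  have hθsin : θ ≤ r * Real.sin ρ := by
    have := mul_le_mul_of_nonneg_left hρ2sin (le_of_lt hr0)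
    simpa [hθdef, mul_div_assoc] using this
  have hcosmono : Real.cos ρ ≤ Real.cos θ :=
    Real.cos_le_cos_of_nonneg_of_le_pi (le_of_lt hθ0) (by linarith) hθρ
  have hsinle : Real.sin θ ≤ θ := Real.sin_le (le_of_lt hθ0)
  -- key: sin θ * cos ρ ≤ r * sin ρ * cos θ
  have hkey : Real.sin θ * Real.cos ρ ≤ r * Real.sin ρ * Real.cos θ := by
    calc Real.sin θ * Real.cos ρ ≤ θ * Real.cos θ := by
          apply mul_le_mul hsinle hcosmono hcosρ (le_of_lt hθ0)
      _ ≤ (r * Real.sin ρ) * Real.cos θ := by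
          apply mul_le_mul_of_nonneg_right hθsin (le_of_lt hcosθ)
  have hdivle : (Real.cos ρ / Real.sin ρ) / r ≤ Real.cos θ / Real.sin θ := by
    rw [div_div, div_le_div_iff₀ (by positivity) hsinθ]
    nlinarith
  have htan : Real.cos θ / Real.sin θ = Real.tan (Real.pi / 2 - θ) := by
    rw [Real.tan_pi_div_two_sub, Real.tan_eq_sin_div_cos, inv_div]
  have harctan : Real.arctan ((Real.cos ρ / Real.sin ρ) / r) ≤ Real.pi / 2 - θ := by
    calc Real.arctan ((Real.cos ρ / Real.sin ρ) / r)
        ≤ Real.arctan (Real.tan (Real.pi / 2 - θ)) := by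
          exact Real.arctan_strictMono.monotone (htan ▸ hdivle)
      _ = Real.pi / 2 - θ := Real.arctan_tan (by linarith) (by linarith)
  simp only [arccot, ge_iff_le]
  linarith
end
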